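/- Let N ≥ 2, α ∈ (0,2), β := 2(α−1)/α, κ_α := 2^{1−α}Γ(1−α/2)/Γ(α/2), Ω ⊂ ℝ^N a bounded open set, and let w : Ω × (0,∞) → [0,∞) be continuous and bounded on the closure of C_Ω := Ω × (0,∞), of class C² on C_Ω with bounded derivatives up to order two, satisfying z^β ∂²_z w + Δ_x w = 0 in C_Ω, w = 0 on ∂Ω × [0,∞), with |{x ∈ Ω : w(x,z) = w*(s,z)}| = 0 for almost every (s,z), and lim_{z→0⁺} ∂_z w(x,z) = −α^{α−1} κ_α f(x) uniformly in x ∈ Ω for a bounded continuous f. Then U(s,z) := ∫_0^s w*(σ,z) dσ satisfies liminf_{z→0⁺} ∂U/∂z(s,z) ≥ −α^{α−1} κ_α ∫_0^s f*(σ) dσ for every s ∈ (0,|Ω|). -/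

import Mathlib

/-!
For `0 < z < z' < δ` the Neumann condition and the mean value theorem give the pointwise bound
`w(x,z) ≤ w(x,z') + (z' - z) (α^{α-1} κ_α |f x| + ε)`. The functional `g ↦ ∫₀ˢ g*` is
subadditive: if `|g₁| ≤ |g₂| + |h|` then `∫₀ˢ g₁* ≤ ∫₀ˢ g₂* + ∫₀ˢ h*`, because
`|g₁| ≤ (|g₂| - g₂*(s))₊ + (|h| - h*(s))₊ + g₂*(s) + h*(s)` and, by equimeasurability
(`∫₀^{|Ω|} g* = ∫_Ω |g|`), `s g*(s) + ∫_Ω (|g| - g*(s))₊ ≤ ∫₀ˢ g*`. Hence every forward difference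
quotient of `U(s,·)` near `0` is at least `-α^{α-1} κ_α ∫₀ˢ f* - ε`, and so is `∂U/∂z`. Where
`deriv` or `liminf` take the junk value `0` the bound holds as well, since it is nonpositive.
-/

open MeasureTheory Filter Set

noncomputable section

abbrev Euc (N : ℕ) := EuclideanSpace ℝ (Fin N)

/-- Decreasing rearrangement of `g` on `E`:
`g*(s) = sup {t ≥ 0 : |{x ∈ E : |g x| > t}| > s}`. -/
def rearr {N : ℕ} (E : Set (Euc N)) (g : Euc N → ℝ) (s : ℝ) : ℝ :=
  sSup {t : ℝ | 0 ≤ t ∧ ENNReal.ofReal s < volume {x | x ∈ E ∧ t < |g x|}}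

/-- `κ_α = 2^{1-α} Γ(1-α/2) / Γ(α/2)`. -/
def kappa (α : ℝ) : ℝ := (2 : ℝ) ^ (1 - α) * Real.Gamma (1 - α / 2) / Real.Gamma (α / 2)

/-- Laplacian of `w` with respect to the `x` variables. -/
def lapx {N : ℕ} (w : Euc N → ℝ → ℝ) (x : Euc N) (z : ℝ) : ℝ :=
  ∑ i : Fin N, deriv (deriv fun t : ℝ => w (x + t • EuclideanSpace.single i (1 : ℝ)) z) 0

open scoped ENNReal Topology

def distribution {N : ℕ} (E : Set (Euc N)) (g : Euc N → ℝ) (t : ℝ) : ℝ≥0∞ :=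
  volume {x | x ∈ E ∧ t < |g x|}

section Rearrangement

variable {N : ℕ} {E : Set (Euc N)} {g u v : Euc N → ℝ} {M σ s t : ℝ}

lemma distribution_antitone : Antitone (distribution E g) := fun _ _ h =>
  measure_mono fun _ hx => ⟨hx.1, h.trans_lt hx.2⟩

lemma distribution_le_volume : distribution E g t ≤ volume E :=
  measure_mono fun _ hx => hx.1

lemma distribution_eq_zero (h : ∀ x ∈ E, |g x| ≤ t) : distribution E g t = 0 :=
  measure_mono_null (fun x hx => (h x hx.1).not_gt hx.2) measure_empty

lemma rearr_nonneg : 0 ≤ rearr E g σ :=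
  Real.sSup_nonneg fun _ ht => ht.1

lemma bddAbove_setOf_lt_distribution (hM : ∀ x ∈ E, |g x| ≤ M) :
    BddAbove {t | 0 ≤ t ∧ ENNReal.ofReal σ < distribution E g t} :=
  ⟨M, fun _ ht => not_lt.1 fun hMt => ENNReal.not_lt_zero <|
    ht.2.trans_eq (distribution_eq_zero fun x hx => (hM x hx).trans hMt.le)⟩

lemma le_rearr (hM : ∀ x ∈ E, |g x| ≤ M) (ht : 0 ≤ t)
    (h : ENNReal.ofReal σ < distribution E g t) : t ≤ rearr E g σ :=
  le_csSup (bddAbove_setOf_lt_distribution hM) ⟨ht, h⟩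

lemma rearr_le {a : ℝ} (ha : 0 ≤ a)
    (h : ∀ t, 0 ≤ t → ENNReal.ofReal σ < distribution E g t → t ≤ a) : rearr E g σ ≤ a :=
  Real.sSup_le (fun t ht => h t ht.1 ht.2) ha

lemma rearr_antitone (hM : ∀ x ∈ E, |g x| ≤ M) : Antitone (rearr E g) := fun _ _ h =>
  rearr_le rearr_nonneg fun _ ht hlt =>
    le_rearr hM ht ((ENNReal.ofReal_le_ofReal h).trans_lt hlt)

lemma rearr_intervalIntegrable (hM : ∀ x ∈ E, |g x| ≤ M) (a b : ℝ) :
    IntervalIntegrable (rearr E g) volume a b :=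
  ((rearr_antitone hM).antitoneOn _).intervalIntegrable

lemma rearr_le_mul_add {c d : ℝ} (hc : 0 ≤ c) (hd : 0 ≤ d) (hM : ∀ x ∈ E, |u x| ≤ M)
    (h : ∀ x ∈ E, |v x| ≤ c * |u x| + d) : rearr E v σ ≤ c * rearr E u σ + d := by
  have hu : 0 ≤ rearr E u σ := rearr_nonneg
  refine rearr_le (by positivity) fun t _ hvt => ?_
  by_contra! hlt
  have hdt : d < t := by nlinarith
  rcases hc.eq_or_lt with rfl | hc
  · refine ENNReal.not_lt_zero (hvt.trans_eq (distribution_eq_zero fun x hx => ?_))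
    linarith [h x hx]
  · have hsub : {x | x ∈ E ∧ t < |v x|} ⊆ {x | x ∈ E ∧ (t - d) / c < |u x|} :=
      fun x hx => ⟨hx.1, (div_lt_iff₀ hc).2 (by linarith [h x hx.1, hx.2])⟩
    have := le_rearr hM (div_pos (sub_pos.2 hdt) hc).le (hvt.trans_le (measure_mono hsub))
    rw [div_le_iff₀ hc] at this
    linarith

lemma rearr_le_max_sub (ht : 0 ≤ t) (hM : ∀ x ∈ E, |u x| ≤ M)
    (h : ∀ x ∈ E, |v x| ≤ max (|u x| - t) 0) :
    rearr E v σ ≤ max (rearr E u σ - t) 0 := by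
  refine rearr_le (le_max_right _ _) fun t' ht' hvt => le_max_of_le_left ?_
  have hsub : {x | x ∈ E ∧ t' < |v x|} ⊆ {x | x ∈ E ∧ t' + t < |u x|} := by
    refine fun x hx => ⟨hx.1, ?_⟩
    have := hx.2.trans_le (h x hx.1)
    rw [lt_max_iff] at this
    rcases this with h' | h' <;> linarith
  linarith [le_rearr hM (by linarith) (hvt.trans_le (measure_mono hsub))]

lemma volume_setOf_lt_distribution (hM : ∀ x ∈ E, |g x| ≤ M) :
    volume {t | 0 < t ∧ ENNReal.ofReal σ < distribution E g t} =
      ENNReal.ofReal (rearr E g σ) := by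
  have hsub : Ioo 0 (rearr E g σ) ⊆ {t | 0 < t ∧ ENNReal.ofReal σ < distribution E g t} := by
    rintro t ⟨ht, htr⟩
    have hne : {t | 0 ≤ t ∧ ENNReal.ofReal σ < distribution E g t}.Nonempty :=
      nonempty_iff_ne_empty.2 fun hempty => by
        have : rearr E g σ = 0 := (congrArg sSup hempty).trans Real.sSup_empty
        linarith
    obtain ⟨t', ht', htt'⟩ := exists_lt_of_lt_csSup hne htr
    exact ⟨ht, ht'.2.trans_le (distribution_antitone htt'.le)⟩
  have hsup : {t | 0 < t ∧ ENNReal.ofReal σ < distribution E g t} ⊆ Ioc 0 (rearr E g σ) :=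
    fun t ht => ⟨ht.1, le_rearr hM ht.1.le ht.2⟩
  refine le_antisymm ((measure_mono hsup).trans_eq ?_) ((measure_mono hsub).trans_eq' ?_) <;>
    simp

lemma lintegral_rearr_eq_lintegral_distribution (hE : volume E ≠ ⊤)
    (hM : ∀ x ∈ E, |g x| ≤ M) :
    ∫⁻ σ in Ioo 0 (volume E).toReal, ENNReal.ofReal (rearr E g σ) =
      ∫⁻ t in Ioi 0, distribution E g t := by
  set L := (volume E).toReal
  set D := distribution E g
  set S : Set (ℝ × ℝ) := (Ioo 0 L ×ˢ Ioi 0) ∩ {p | ENNReal.ofReal p.1 < D p.2}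
  have hS : MeasurableSet S := (measurableSet_Ioo.prod measurableSet_Ioi).inter
    (measurableSet_lt (ENNReal.measurable_ofReal.comp measurable_fst)
      (distribution_antitone.measurable.comp measurable_snd))
  have hslice_σ (σ : ℝ) :
      volume (Prod.mk σ ⁻¹' S) = (Ioo 0 L).indicator (fun σ => ENNReal.ofReal (rearr E g σ)) σ := by
    by_cases hσ : σ ∈ Ioo 0 L
    · rw [indicator_of_mem hσ, ← volume_setOf_lt_distribution hM]
      congr 1
      ext t
      simp [S, D, hσ]
    · rw [indicator_of_notMem hσ]
      convert measure_empty (μ := volume)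
      ext t
      simp [S, D, hσ]
  have hslice_t (t : ℝ) : volume ((·, t) ⁻¹' S) = (Ioi 0).indicator D t := by
    by_cases ht : t ∈ Ioi 0
    · rw [indicator_of_mem ht]
      have hDt : D t ≠ ⊤ := ne_top_of_le_ne_top hE distribution_le_volume
      have hDL : (D t).toReal ≤ L := ENNReal.toReal_mono hE distribution_le_volume
      have : (·, t) ⁻¹' S = Ioo 0 (D t).toReal := by
        ext σ
        simp only [S, mem_preimage, mem_inter_iff, mem_prod, mem_ofPred_eq, mem_Ioo, mem_Ioi]
        constructor
        · rintro ⟨⟨⟨hσ, -⟩, -⟩, hσD⟩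
          exact ⟨hσ, (ENNReal.ofReal_lt_iff_lt_toReal hσ.le hDt).1 hσD⟩
        · rintro ⟨hσ, hσD⟩
          exact ⟨⟨⟨hσ, hσD.trans_le hDL⟩, ht⟩, (ENNReal.ofReal_lt_iff_lt_toReal hσ.le hDt).2 hσD⟩
      rw [this, Real.volume_Ioo, sub_zero, ENNReal.ofReal_toReal hDt]
    · rw [indicator_of_notMem ht]
      convert measure_empty (μ := volume)
      ext σ
      simp [S, ht]
  calc ∫⁻ σ in Ioo 0 L, ENNReal.ofReal (rearr E g σ)
      = ∫⁻ σ, volume (Prod.mk σ ⁻¹' S) := by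
        rw [← lintegral_indicator measurableSet_Ioo]
        simp_rw [hslice_σ]
    _ = (volume.prod volume) S := (Measure.prod_apply hS).symm
    _ = ∫⁻ t, volume ((·, t) ⁻¹' S) := Measure.prod_apply_symm hS
    _ = ∫⁻ t in Ioi 0, D t := by
        simp_rw [hslice_t]
        exact lintegral_indicator measurableSet_Ioi D

lemma integral_rearr_eq_setIntegral_abs (hE : MeasurableSet E) (hEfin : volume E ≠ ⊤)
    (hg : AEStronglyMeasurable g (volume.restrict E)) (hM : ∀ x ∈ E, |g x| ≤ M) :
    ∫ σ in 0..(volume E).toReal, rearr E g σ = ∫ x in E, |g x| := by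
  have hlayer : ∫⁻ x in E, ENNReal.ofReal |g x| = ∫⁻ t in Ioi 0, distribution E g t := by
    rw [lintegral_eq_lintegral_meas_lt _ (Eventually.of_forall fun _ => abs_nonneg _)
      (continuous_abs.comp_aestronglyMeasurable hg).aemeasurable]
    refine setLIntegral_congr_fun measurableSet_Ioi fun t _ => ?_
    rw [Measure.restrict_apply' hE, inter_comm]
    rfl
  rw [intervalIntegral.integral_of_le ENNReal.toReal_nonneg, integral_Ioc_eq_integral_Ioo,
    integral_eq_lintegral_of_nonneg_ae (Eventually.of_forall fun _ => rearr_nonneg)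
      (rearr_antitone hM).measurable.aestronglyMeasurable,
    integral_eq_lintegral_of_nonneg_ae (Eventually.of_forall fun _ => abs_nonneg _)
      (continuous_abs.comp_aestronglyMeasurable hg),
    lintegral_rearr_eq_lintegral_distribution hEfin hM, hlayer]

lemma integral_rearr_le_mul_integral_add {c d : ℝ} (hc : 0 ≤ c) (hd : 0 ≤ d) (hs : 0 ≤ s)
    (hM : ∀ x ∈ E, |u x| ≤ M) (h : ∀ x ∈ E, |v x| ≤ c * |u x| + d) :
    ∫ σ in 0..s, rearr E v σ ≤ c * (∫ σ in 0..s, rearr E u σ) + d * s := by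
  have hMv : ∀ x ∈ E, |v x| ≤ c * M + d := fun x hx =>
    (h x hx).trans (by gcongr; exact hM x hx)
  have hu := rearr_intervalIntegrable hM 0 s
  calc ∫ σ in 0..s, rearr E v σ ≤ ∫ σ in 0..s, (c * rearr E u σ + d) :=
        intervalIntegral.integral_mono_on hs (rearr_intervalIntegrable hMv 0 s)
          ((hu.const_mul c).add intervalIntegrable_const) fun _ _ => rearr_le_mul_add hc hd hM h
    _ = c * (∫ σ in 0..s, rearr E u σ) + d * s := by
        rw [intervalIntegral.integral_add (hu.const_mul c) intervalIntegrable_const,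
          intervalIntegral.integral_const_mul, intervalIntegral.integral_const, smul_eq_mul]
        ring

lemma abs_max_abs_sub_le (ht : 0 ≤ t) (hM : ∀ x ∈ E, |g x| ≤ M) :
    ∀ x ∈ E, |max (|g x| - t) 0| ≤ M := fun x hx => by
  rw [abs_of_nonneg (le_max_right _ _)]
  exact max_le (by linarith [hM x hx]) ((abs_nonneg _).trans (hM x hx))

lemma aestronglyMeasurable_max_abs_sub (hg : AEStronglyMeasurable g (volume.restrict E)) (t : ℝ) :
    AEStronglyMeasurable (fun x => max (|g x| - t) 0) (volume.restrict E) :=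
  (by fun_prop : Continuous fun y : ℝ => max (|y| - t) 0).comp_aestronglyMeasurable hg

lemma mul_rearr_add_integral_max_sub_le (hE : MeasurableSet E) (hEfin : volume E ≠ ⊤)
    (hg : AEStronglyMeasurable g (volume.restrict E)) (hM : ∀ x ∈ E, |g x| ≤ M)
    (hs : 0 ≤ s) (hsE : s ≤ (volume E).toReal) :
    s * rearr E g s + (∫ x in E, max (|g x| - rearr E g s) 0) ≤ ∫ σ in 0..s, rearr E g σ := by
  set r := rearr E g s
  set v : Euc N → ℝ := fun x => max (|g x| - r) 0
  have hv0 (x : Euc N) : 0 ≤ v x := le_max_right _ _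
  have hMv : ∀ x ∈ E, |v x| ≤ M := abs_max_abs_sub_le rearr_nonneg hM
  have hv : AEStronglyMeasurable v (volume.restrict E) := aestronglyMeasurable_max_abs_sub hg r
  have hvg (σ : ℝ) : rearr E v σ ≤ max (rearr E g σ - r) 0 :=
    rearr_le_max_sub rearr_nonneg hM fun x _ => (abs_of_nonneg (hv0 x)).le
  have hvI := rearr_intervalIntegrable hMv
  have hhead : ∫ σ in 0..s, rearr E v σ ≤ ∫ σ in 0..s, (rearr E g σ - r) :=
    intervalIntegral.integral_mono_on hs (hvI 0 s)
      ((rearr_intervalIntegrable hM 0 s).sub intervalIntegrable_const) fun σ hσ =>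
        (hvg σ).trans_eq (max_eq_left (sub_nonneg.2 (rearr_antitone hM hσ.2)))
  have htail : ∫ σ in s..(volume E).toReal, rearr E v σ ≤ 0 := by
    simpa using intervalIntegral.integral_mono_on hsE (hvI s _) intervalIntegrable_const
      fun σ hσ => (hvg σ).trans_eq (max_eq_right (sub_nonpos.2 (rearr_antitone hM hσ.1)))
  have hlayer : ∫ x in E, v x =
      (∫ σ in 0..s, rearr E v σ) + ∫ σ in s..(volume E).toReal, rearr E v σ := by
    rw [intervalIntegral.integral_add_adjacent_intervals (hvI 0 s) (hvI s _),
      integral_rearr_eq_setIntegral_abs hE hEfin hv hMv]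
    simp_rw [abs_of_nonneg (hv0 _)]
  rw [intervalIntegral.integral_sub (rearr_intervalIntegrable hM 0 s) intervalIntegrable_const,
    intervalIntegral.integral_const, smul_eq_mul, sub_zero] at hhead
  linarith

lemma integral_rearr_le_add {g₁ g₂ h : Euc N → ℝ} {M₂ M₃ : ℝ} (hE : MeasurableSet E)
    (hEfin : volume E ≠ ⊤) (hg₂ : AEStronglyMeasurable g₂ (volume.restrict E))
    (hh : AEStronglyMeasurable h (volume.restrict E))
    (hM₂ : ∀ x ∈ E, |g₂ x| ≤ M₂) (hM₃ : ∀ x ∈ E, |h x| ≤ M₃)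
    (hle : ∀ x ∈ E, |g₁ x| ≤ |g₂ x| + |h x|) (hs : 0 ≤ s) (hsE : s ≤ (volume E).toReal) :
    ∫ σ in 0..s, rearr E g₁ σ ≤ (∫ σ in 0..s, rearr E g₂ σ) + ∫ σ in 0..s, rearr E h σ := by
  set r₂ := rearr E g₂ s
  set r₃ := rearr E h s
  set v₂ : Euc N → ℝ := fun x => max (|g₂ x| - r₂) 0
  set v₃ : Euc N → ℝ := fun x => max (|h x| - r₃) 0
  have hr₂ : 0 ≤ r₂ := rearr_nonneg
  have hr₃ : 0 ≤ r₃ := rearr_nonneg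
  have hv₂ : AEStronglyMeasurable v₂ (volume.restrict E) := aestronglyMeasurable_max_abs_sub hg₂ r₂
  have hv₃ : AEStronglyMeasurable v₃ (volume.restrict E) := aestronglyMeasurable_max_abs_sub hh r₃
  have hMv₂ : ∀ x ∈ E, |v₂ x| ≤ M₂ := abs_max_abs_sub_le hr₂ hM₂
  have hMv₃ : ∀ x ∈ E, |v₃ x| ≤ M₃ := abs_max_abs_sub_le hr₃ hM₃
  have hMp : ∀ x ∈ E, |(v₂ + v₃) x| ≤ M₂ + M₃ := fun x hx =>
    (abs_add_le _ _).trans (add_le_add (hMv₂ x hx) (hMv₃ x hx))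
  have hp0 (x : Euc N) : 0 ≤ (v₂ + v₃) x := add_nonneg (le_max_right _ _) (le_max_right _ _)
  have hcut : ∫ σ in 0..s, rearr E g₁ σ ≤ 1 * (∫ σ in 0..s, rearr E (v₂ + v₃) σ) + (r₂ + r₃) * s :=
    integral_rearr_le_mul_integral_add zero_le_one (by positivity) hs hMp fun x hx => by
      rw [one_mul, abs_of_nonneg (hp0 x), Pi.add_apply]
      linarith [hle x hx, le_max_left (|g₂ x| - r₂) 0, le_max_left (|h x| - r₃) 0]
  have hfull : ∫ σ in 0..s, rearr E (v₂ + v₃) σ ≤ (∫ x in E, v₂ x) + ∫ x in E, v₃ x := by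
    calc ∫ σ in 0..s, rearr E (v₂ + v₃) σ
        ≤ ∫ σ in 0..(volume E).toReal, rearr E (v₂ + v₃) σ :=
          intervalIntegral.integral_mono_interval le_rfl hs hsE
            (.of_forall fun _ => rearr_nonneg) (rearr_intervalIntegrable hMp _ _)
      _ = ∫ x in E, (v₂ x + v₃ x) := by
          rw [integral_rearr_eq_setIntegral_abs hE hEfin (hv₂.add hv₃) hMp]
          simp_rw [abs_of_nonneg (hp0 _), Pi.add_apply]
      _ = (∫ x in E, v₂ x) + ∫ x in E, v₃ x :=
          integral_add
            (IntegrableOn.of_bound hEfin.lt_top hv₂ M₂ ((ae_restrict_iff' hE).2 (.of_forall hMv₂)))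
            (IntegrableOn.of_bound hEfin.lt_top hv₃ M₃ ((ae_restrict_iff' hE).2 (.of_forall hMv₃)))
  linarith [mul_rearr_add_integral_max_sub_le hE hEfin hg₂ hM₂ hs hsE,
    mul_rearr_add_integral_max_sub_le hE hEfin hh hM₃ hs hsE]

lemma integral_rearr_le_add_mul_integral_add {g₁ g₂ : Euc N → ℝ} {M₂ c d : ℝ}
    (hE : MeasurableSet E) (hEfin : volume E ≠ ⊤)
    (hg₂ : AEStronglyMeasurable g₂ (volume.restrict E))
    (hu : AEStronglyMeasurable u (volume.restrict E))
    (hM₂ : ∀ x ∈ E, |g₂ x| ≤ M₂) (hM : ∀ x ∈ E, |u x| ≤ M) (hc : 0 ≤ c) (hd : 0 ≤ d)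
    (hle : ∀ x ∈ E, |g₁ x| ≤ |g₂ x| + c * |u x| + d) (hs : 0 ≤ s)
    (hsE : s ≤ (volume E).toReal) :
    ∫ σ in 0..s, rearr E g₁ σ ≤
      (∫ σ in 0..s, rearr E g₂ σ) + (c * (∫ σ in 0..s, rearr E u σ) + d * s) := by
  set h : Euc N → ℝ := fun x => c * |u x| + d
  have habs (x : Euc N) : |h x| = c * |u x| + d := abs_of_nonneg (by positivity)
  calc ∫ σ in 0..s, rearr E g₁ σ ≤ (∫ σ in 0..s, rearr E g₂ σ) + ∫ σ in 0..s, rearr E h σ :=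
        integral_rearr_le_add (M₃ := c * M + d) hE hEfin hg₂
          ((by fun_prop : Continuous fun y : ℝ => c * |y| + d).comp_aestronglyMeasurable hu) hM₂
          (fun x hx => (habs x).trans_le (by gcongr; exact hM x hx))
          (fun x hx => (hle x hx).trans_eq (by rw [habs, add_assoc])) hs hsE
    _ ≤ (∫ σ in 0..s, rearr E g₂ σ) + (c * (∫ σ in 0..s, rearr E u σ) + d * s) :=
        add_le_add_right (integral_rearr_le_mul_integral_add hc hd hs hM fun x _ =>
          (habs x).le) _

end Rearrangement

lemma le_liminf_of_forall_pos_eventually_sub_le {ι : Type*} {l : Filter ι} {u : ι → ℝ} {a : ℝ}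
    (ha : a ≤ 0) (h : ∀ ε > 0, ∀ᶠ i in l, a - ε ≤ u i) : a ≤ liminf u l := by
  rw [liminf_eq]
  by_cases hbdd : BddAbove {b | ∀ᶠ i in l, b ≤ u i}
  · exact le_of_forall_pos_le_add fun ε hε => by linarith [le_csSup hbdd (h ε hε)]
  · rwa [Real.sSup_of_not_bddAbove hbdd]

lemma le_deriv_of_forall_mul_sub_le {F : ℝ → ℝ} {z b m : ℝ} (hzb : z < b) (hm : m ≤ 0)
    (h : ∀ z' ∈ Ioo z b, m * (z' - z) ≤ F z' - F z) : m ≤ deriv F z := by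
  by_cases hF : DifferentiableAt ℝ F z
  · have hslope : Tendsto (slope F z) (𝓝[>] z) (𝓝 (deriv F z)) :=
      (hasDerivAt_iff_tendsto_slope.mp hF.hasDerivAt).mono_left
        (nhdsWithin_mono z fun _ hy => ne_of_gt hy)
    refine ge_of_tendsto hslope (eventually_of_mem (Ioo_mem_nhdsGT hzb) fun z' hz' => ?_)
    rw [slope_def_field, le_div_iff₀ (sub_pos.2 hz'.1)]
    exact h z' hz'
  · rwa [deriv_zero_of_not_differentiableAt hF]

lemma neg_le_liminf_deriv_of_forall_sub_le {F : ℝ → ℝ} {C : ℝ} (hC : 0 ≤ C)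
    (h : ∀ ε > 0, ∃ δ > 0, ∀ z ∈ Ioo 0 δ, ∀ z' ∈ Ioo z δ, F z - F z' ≤ (z' - z) * (C + ε)) :
    -C ≤ liminf (deriv F) (𝓝[>] 0) := by
  refine le_liminf_of_forall_pos_eventually_sub_le (neg_nonpos.2 hC) fun ε hε => ?_
  obtain ⟨δ, hδ, hF⟩ := h ε hε
  filter_upwards [Ioo_mem_nhdsGT hδ] with z hz
  refine le_deriv_of_forall_mul_sub_le hz.2 (by linarith) fun z' hz' => ?_
  linarith [hF z hz z' hz']

lemma le_add_mul_sub_of_forall_neg_le_deriv {g : ℝ → ℝ} {a b K z z' : ℝ}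
    (hg : DifferentiableOn ℝ g (Ioo a b)) (hK : ∀ c ∈ Ioo a b, -K ≤ deriv g c)
    (hz : z ∈ Ioo a b) (hz' : z' ∈ Ioo a b) (hzz' : z ≤ z') : g z ≤ g z' + (z' - z) * K := by
  have := (convex_Ioo a b).mul_sub_le_image_sub_of_le_deriv hg.continuousOn
    (by rwa [interior_Ioo]) (by rwa [interior_Ioo]) z hz z' hz' hzz'
  linarith

lemma kappa_pos {α : ℝ} (hα : α ∈ Ioo (0 : ℝ) 2) : 0 < kappa α :=
  div_pos (mul_pos (Real.rpow_pos_of_pos two_pos _) (Real.Gamma_pos_of_pos (by linarith [hα.2])))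
    (Real.Gamma_pos_of_pos (by linarith [hα.1]))

theorem concentration_boundary_inequality_general
    {N : ℕ} (α : ℝ) (hα : α ∈ Ioo (0 : ℝ) 2)
    (Ω : Set (Euc N)) (hΩo : IsOpen Ω) (hΩb : Bornology.IsBounded Ω)
    (f : Euc N → ℝ) (hfc : ContinuousOn f Ω) (hfb : ∃ M : ℝ, ∀ x ∈ Ω, |f x| ≤ M)
    (w : Euc N → ℝ → ℝ)
    (hpos : ∀ x ∈ Ω, ∀ z ∈ Ioi (0 : ℝ), 0 ≤ w x z)
    (hbdd : ∃ M : ℝ, ∀ p ∈ closure (Ω ×ˢ Ioi (0 : ℝ)), |w (Prod.fst p) p.2| ≤ M)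
    (hC2 : ContDiffOn ℝ 2 (fun p : Euc N × ℝ => w p.1 p.2) (Ω ×ˢ Ioi (0 : ℝ)))
    (hneumann : ∀ ε > (0 : ℝ), ∃ δ > (0 : ℝ), ∀ z ∈ Ioo (0 : ℝ) δ, ∀ x ∈ Ω,
      |deriv (w x) z + α ^ (α - 1) * kappa α * f x| < ε) :
    ∀ s ∈ Ioo (0 : ℝ) (volume Ω).toReal,
      -(α ^ (α - 1) * kappa α * ∫ σ in (0 : ℝ)..s, rearr Ω f σ) ≤
        liminf (fun z : ℝ =>
            deriv (fun z' : ℝ => ∫ σ in (0 : ℝ)..s, rearr Ω (fun x => w x z') σ) z)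
          (nhdsWithin 0 (Ioi 0)) := by
  obtain ⟨Mf, hMf⟩ := hfb
  obtain ⟨Mw, hMw⟩ := hbdd
  have hΩfin : volume Ω ≠ ⊤ := hΩb.measure_lt_top.ne
  have hwM (z : ℝ) (hz : 0 < z) : ∀ x ∈ Ω, |w x z| ≤ Mw := fun x hx =>
    hMw (x, z) (subset_closure ⟨hx, hz⟩)
  have hw_meas (z : ℝ) (hz : 0 < z) : AEStronglyMeasurable (fun x => w x z) (volume.restrict Ω) :=
    (hC2.continuousOn.comp (Continuous.prodMk_left z).continuousOn fun x hx => ⟨hx, hz⟩)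
      |>.aestronglyMeasurable hΩo.measurableSet
  have hw_diff (x : Euc N) (hx : x ∈ Ω) : DifferentiableOn ℝ (w x) (Ioi 0) :=
    (hC2.differentiableOn two_ne_zero).comp ((differentiableOn_const x).prodMk differentiableOn_id)
      fun z hz => ⟨hx, hz⟩
  intro s hs
  set A := α ^ (α - 1) * kappa α
  have hA : 0 < A := mul_pos (Real.rpow_pos_of_pos hα.1 _) (kappa_pos hα)
  refine neg_le_liminf_deriv_of_forall_sub_le
    (mul_nonneg hA.le (intervalIntegral.integral_nonneg hs.1.le fun _ _ => rearr_nonneg))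
    fun ε hε => ?_
  obtain ⟨δ, hδ, hδε⟩ := hneumann (ε / s) (div_pos hε hs.1)
  refine ⟨δ, hδ, fun z hz z' hz' => ?_⟩
  have hz'0 : 0 < z' := hz.1.trans hz'.1
  have hwz : ∀ x ∈ Ω, |w x z| ≤ |w x z'| + (z' - z) * A * |f x| + (z' - z) * (ε / s) := by
    intro x hx
    have hKf : A * f x ≤ A * |f x| := mul_le_mul_of_nonneg_left (le_abs_self _) hA.le
    have := le_add_mul_sub_of_forall_neg_le_deriv ((hw_diff x hx).mono Ioo_subset_Ioi_self)
      (K := A * |f x| + ε / s) (fun c hc => by linarith [(abs_lt.1 (hδε c hc x hx)).1])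
      hz ⟨hz'0, hz'.2⟩ hz'.1.le
    rw [abs_of_nonneg (hpos x hx z hz.1), abs_of_nonneg (hpos x hx z' hz'0)]
    linarith
  have hΔ : 0 ≤ z' - z := sub_nonneg.2 hz'.1.le
  have := integral_rearr_le_add_mul_integral_add hΩo.measurableSet hΩfin (hw_meas z' hz'0)
    (hfc.aestronglyMeasurable hΩo.measurableSet) (hwM z' hz'0) hMf (mul_nonneg hΔ hA.le)
    (mul_nonneg hΔ (div_pos hε hs.1).le) hwz hs.1.le hs.2.le
  have hεs : (z' - z) * (ε / s) * s = (z' - z) * ε := by rw [mul_assoc, div_mul_cancel₀ _ hs.1.ne']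
  linarith

/-- boundary inequality for the concentration function:
`liminf_{z→0⁺} ∂U/∂z(s,z) ≥ -α^{α-1} κ_α ∫_0^s f*(σ) dσ` for all `s ∈ (0,|Ω|)`. -/
theorem concentration_boundary_inequality
    {N : ℕ} (hN : 2 ≤ N) (α : ℝ) (hα : α ∈ Ioo (0 : ℝ) 2)
    (Ω : Set (Euc N)) (hΩo : IsOpen Ω) (hΩb : Bornology.IsBounded Ω)
    (f : Euc N → ℝ) (hfc : ContinuousOn f Ω) (hfb : ∃ M : ℝ, ∀ x ∈ Ω, |f x| ≤ M)
    (w : Euc N → ℝ → ℝ)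
    (hpos : ∀ x ∈ Ω, ∀ z ∈ Ioi (0 : ℝ), 0 ≤ w x z)
    (hcont : ContinuousOn (fun p : Euc N × ℝ => w p.1 p.2) (closure (Ω ×ˢ Ioi (0 : ℝ))))
    (hbdd : ∃ M : ℝ, ∀ p ∈ closure (Ω ×ˢ Ioi (0 : ℝ)), |w (Prod.fst p) p.2| ≤ M)
    (hC2 : ContDiffOn ℝ 2 (fun p : Euc N × ℝ => w p.1 p.2) (Ω ×ˢ Ioi (0 : ℝ)))
    (hderivBdd : ∃ M : ℝ, ∀ p ∈ Ω ×ˢ Ioi (0 : ℝ),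
      ‖fderiv ℝ (fun q : Euc N × ℝ => w q.1 q.2) p‖ ≤ M ∧
      ‖fderiv ℝ (fderiv ℝ fun q : Euc N × ℝ => w q.1 q.2) p‖ ≤ M)
    (hpde : ∀ x ∈ Ω, ∀ z ∈ Ioi (0 : ℝ),
      z ^ (2 * (α - 1) / α) * deriv (deriv (w x)) z + lapx w x z = 0)
    (hlateral : ∀ x ∈ frontier Ω, ∀ z ∈ Ici (0 : ℝ), w x z = 0)
    (hlevel : ∀ᵐ p : ℝ × ℝ
        ∂(volume.restrict (Ioo (0 : ℝ) (volume Ω).toReal ×ˢ Ioi (0 : ℝ))),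
      volume {x | x ∈ Ω ∧ w x p.2 = rearr Ω (fun x' => w x' p.2) p.1} = 0)
    (hneumann : ∀ ε > (0 : ℝ), ∃ δ > (0 : ℝ), ∀ z ∈ Ioo (0 : ℝ) δ, ∀ x ∈ Ω,
      |deriv (w x) z + α ^ (α - 1) * kappa α * f x| < ε) :
    ∀ s ∈ Ioo (0 : ℝ) (volume Ω).toReal,
      -(α ^ (α - 1) * kappa α * ∫ σ in (0 : ℝ)..s, rearr Ω f σ) ≤
        liminf (fun z : ℝ =>
            deriv (fun z' : ℝ => ∫ σ in (0 : ℝ)..s, rearr Ω (fun x => w x z') σ) z)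
          (nhdsWithin 0 (Ioi 0)) :=
  concentration_boundary_inequality_general α hα Ω hΩo hΩb f hfc hfb w hpos hbdd hC2 hneumann
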